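/- Assume rank 𝒪_N(C,A) = N and let B_1,…,B_K ∈ ℝ^{N×M} be linearly independent. Then for every α⋆ ∈ ℝ^K and every α ∈ ℝ^K with α ≠ α⋆ there exists a control ε ∈ L²((0,T);ℝ^M) such that ‖C·φ_T(B(α⋆),ε) − C·φ_T(B(α),ε)‖₂² > 0. In particular, α = α⋆ is the unique solution of the min-max problem min_{α∈ℝ^K} max_{ε∈E_ad} ‖C·φ_T(B(α⋆),ε) − C·φ_T(B(α),ε)‖₂² whenever E_ad contains the discriminating controls. -/

import Mathlib

open MeasureTheory Matrix

/-- Final state `φ_T(B,ε) = e^{TA} φ₀ + ∫_0^T e^{(T-s)A} B ε(s) ds`. -/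
noncomputable def phiT {N M : ℕ} (T : ℝ) (A : Matrix (Fin N) (Fin N) ℝ)
    (φ₀ : Fin N → ℝ) (B : Matrix (Fin N) (Fin M) ℝ) (ε : ℝ → Fin M → ℝ) : Fin N → ℝ :=
  (NormedSpace.exp (T • A)).mulVec φ₀ +
    ∫ s in (0:ℝ)..T, (NormedSpace.exp ((T - s) • A) * B).mulVec (ε s)

/-- The observability matrix `𝒪_N(C,A)`. -/
def obsMat {N P : ℕ} (A : Matrix (Fin N) (Fin N) ℝ) (C : Matrix (Fin P) (Fin N) ℝ) :
    Matrix (Fin N × Fin P) (Fin N) ℝ :=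
  Matrix.of fun jp i => (C * A ^ (jp.1 : ℕ)) jp.2 i

/-!
Put `D = B(α⋆) - B(α)`, which is nonzero by linear independence, and pick `v` with `D v ≠ 0`.
For the control equal to `v` on `[0, t]` and to `0` afterwards, the output difference is
`C ∫₀ᵗ e^{(T-s)A} D v ds`. If it vanished for every `t ∈ [0, T]`, differentiating in `t` would
give `C e^{uA} D v = 0` for `u ∈ (0, T)`, and differentiating repeatedly in `u`,
`C Aⁿ e^{uA} D v = 0` for all `n`. Full rank of the observability matrix then forces
`e^{uA} D v = 0`, hence `D v = 0`.
-/

theorem eqOn_zero_of_hasDerivAt_of_eqOn_zero {𝕜 E : Type*} [NontriviallyNormedField 𝕜]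
    [NormedAddCommGroup E] [NormedSpace 𝕜 E] {f f' : 𝕜 → E} {U : Set 𝕜} (hU : IsOpen U)
    (hf : ∀ u ∈ U, HasDerivAt f (f' u) u) (hf0 : Set.EqOn f 0 U) : Set.EqOn f' 0 U :=
  fun u hu => (hf u hu).unique <|
    (hasDerivAt_const u 0).congr_of_eventuallyEq (Filter.eventuallyEq_of_mem (hU.mem_nhds hu) hf0)

theorem HasDerivAt.const_mulVec {𝕜 m n : Type*} [NontriviallyNormedField 𝕜] [CompleteSpace 𝕜]
    [Fintype m] [Fintype n] (C : Matrix m n 𝕜) {f : 𝕜 → n → 𝕜} {f' : n → 𝕜} {t : 𝕜}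
    (hf : HasDerivAt f f' t) : HasDerivAt (fun s => C *ᵥ f s) (C *ᵥ f') t :=
  C.mulVecLin.toContinuousLinearMap.hasFDerivAt.comp_hasDerivAt t hf

section Exponential

-- Any norm on matrices would do: only the topology it induces reaches the statements below.
open scoped Matrix.Norms.Operator

theorem hasDerivAt_exp_smul_mulVec {𝕂 n : Type*} [RCLike 𝕂] [Fintype n] [DecidableEq n]
    (A : Matrix n n 𝕂) (x : n → 𝕂) (u : 𝕂) :
    HasDerivAt (fun u : 𝕂 => NormedSpace.exp (u • A) *ᵥ x)
      (A *ᵥ (NormedSpace.exp (u • A) *ᵥ x)) u := by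
  have := ((mulVecBilin 𝕂 𝕂).flip x).toContinuousLinearMap.hasFDerivAt.comp_hasDerivAt u
    (hasDerivAt_exp_smul_const' A u)
  rw [mulVec_mulVec]
  exact this

end Exponential

theorem continuous_exp_sub_smul_mulVec {n : Type*} [Fintype n] [DecidableEq n] (T : ℝ)
    (A : Matrix n n ℝ) (x : n → ℝ) :
    Continuous fun s : ℝ => NormedSpace.exp ((T - s) • A) *ᵥ x :=
  (continuous_iff_continuousAt.2 fun u => (hasDerivAt_exp_smul_mulVec A x u).continuousAt).comp
    (continuous_const.sub continuous_id)

section Observability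

variable {N P : ℕ} {A : Matrix (Fin N) (Fin N) ℝ} {C : Matrix (Fin P) (Fin N) ℝ}

theorem obsMat_mulVec_injective (hrank : (obsMat A C).rank = N) :
    Function.Injective (obsMat A C).mulVec := by
  rw [← Matrix.coe_mulVecLin, ← LinearMap.ker_eq_bot]
  have := (obsMat A C).mulVecLin.finrank_range_add_finrank_ker
  rw [← Matrix.rank, hrank, Module.finrank_fin_fun] at this
  exact Submodule.finrank_eq_zero.mp (by omega)

theorem eq_zero_of_forall_mul_pow_mulVec_eq_zero (hrank : (obsMat A C).rank = N)
    {x : Fin N → ℝ} (hx : ∀ n : ℕ, (C * A ^ n) *ᵥ x = 0) : x = 0 :=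
  obsMat_mulVec_injective hrank <| by
    ext ⟨n, p⟩
    simpa [obsMat, mulVec, dotProduct] using congrFun (hx n) p

theorem eq_zero_of_mulVec_exp_smul_mulVec_eqOn_zero (hrank : (obsMat A C).rank = N)
    {U : Set ℝ} (hU : IsOpen U) (hne : U.Nonempty) {x : Fin N → ℝ}
    (hx : ∀ u ∈ U, C *ᵥ (NormedSpace.exp (u • A) *ᵥ x) = 0) : x = 0 := by
  have hpow (n : ℕ) : ∀ u ∈ U, (C * A ^ n) *ᵥ (NormedSpace.exp (u • A) *ᵥ x) = 0 := by
    induction n with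
    | zero => simpa using hx
    | succ n ih =>
      intro u hu
      have := eqOn_zero_of_hasDerivAt_of_eqOn_zero hU
        (fun u _ => (hasDerivAt_exp_smul_mulVec A x u).const_mulVec (C * A ^ n)) ih hu
      simpa [pow_succ, mulVec_mulVec, Matrix.mul_assoc] using this
  obtain ⟨u₀, hu₀⟩ := hne
  have h0 : NormedSpace.exp (u₀ • A) *ᵥ x = NormedSpace.exp (u₀ • A) *ᵥ 0 := by
    rw [mulVec_zero]
    exact eq_zero_of_forall_mul_pow_mulVec_eq_zero hrank (hpow · u₀ hu₀)
  have hunit : IsUnit (NormedSpace.exp (u₀ • A)) := Matrix.isUnit_exp _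
  exact (mulVec_injective_iff_isUnit (K := ℝ)).2 hunit h0

theorem exists_mulVec_integral_exp_mulVec_ne_zero (hrank : (obsMat A C).rank = N)
    {T : ℝ} (hT : 0 < T) {y : Fin N → ℝ} (hy : y ≠ 0) :
    ∃ t ∈ Set.Icc 0 T, C *ᵥ ∫ s in (0:ℝ)..t, NormedSpace.exp ((T - s) • A) *ᵥ y ≠ 0 := by
  by_contra! h
  have hderiv := eqOn_zero_of_hasDerivAt_of_eqOn_zero isOpen_Ioo
    (fun t _ => ((continuous_exp_sub_smul_mulVec T A y).integral_hasStrictDerivAt 0 t)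
      |>.hasDerivAt.const_mulVec C)
    (fun t ht => h t (Set.Ioo_subset_Icc_self ht))
  refine hy (eq_zero_of_mulVec_exp_smul_mulVec_eqOn_zero hrank isOpen_Ioo
    (Set.nonempty_Ioo.2 hT) fun u hu => ?_)
  simpa using hderiv (show T - u ∈ Set.Ioo 0 T by constructor <;> linarith [hu.1, hu.2])

end Observability

theorem phiT_indicator_const {N M : ℕ} {T t : ℝ} (ht : t ∈ Set.Icc 0 T)
    (A : Matrix (Fin N) (Fin N) ℝ) (φ₀ : Fin N → ℝ) (B : Matrix (Fin N) (Fin M) ℝ)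
    (v : Fin M → ℝ) :
    phiT T A φ₀ B ({x | x ≤ t}.indicator fun _ => v) =
      NormedSpace.exp (T • A) *ᵥ φ₀ +
        ∫ s in (0:ℝ)..t, NormedSpace.exp ((T - s) • A) *ᵥ (B *ᵥ v) := by
  rw [phiT, ← intervalIntegral.integral_indicator ht]
  congr 2 with s : 1
  by_cases hs : s ≤ t <;> simp [hs, mulVec_mulVec]

theorem phiT_indicator_const_sub {N M : ℕ} {T t : ℝ} (ht : t ∈ Set.Icc 0 T)
    (A : Matrix (Fin N) (Fin N) ℝ) (φ₀ : Fin N → ℝ) (B B' : Matrix (Fin N) (Fin M) ℝ)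
    (v : Fin M → ℝ) :
    phiT T A φ₀ B ({x | x ≤ t}.indicator fun _ => v) -
        phiT T A φ₀ B' ({x | x ≤ t}.indicator fun _ => v) =
      ∫ s in (0:ℝ)..t, NormedSpace.exp ((T - s) • A) *ᵥ ((B - B') *ᵥ v) := by
  rw [phiT_indicator_const ht, phiT_indicator_const ht, add_sub_add_left_eq_sub,
    ← intervalIntegral.integral_sub ((continuous_exp_sub_smul_mulVec T A _).intervalIntegrable 0 t)
      ((continuous_exp_sub_smul_mulVec T A _).intervalIntegrable 0 t)]
  simp only [sub_mulVec, mulVec_sub]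

theorem minmax_unique_solution_general {N M P K : ℕ}
    (T : ℝ) (hT : 0 < T)
    (A : Matrix (Fin N) (Fin N) ℝ) (C : Matrix (Fin P) (Fin N) ℝ)
    (φ₀ : Fin N → ℝ)
    (hrank : (obsMat A C).rank = N)
    (Bs : Fin K → Matrix (Fin N) (Fin M) ℝ)
    (hli : LinearIndependent ℝ Bs) :
    ∀ αstar α : Fin K → ℝ, α ≠ αstar →
      ∃ ε : ℝ → Fin M → ℝ,
        MemLp ε 2 (volume.restrict (Set.Ioc (0:ℝ) T)) ∧
        0 < (C.mulVec (phiT T A φ₀ (∑ j, αstar j • Bs j) ε) -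
              C.mulVec (phiT T A φ₀ (∑ j, α j • Bs j) ε)) ⬝ᵥ
            (C.mulVec (phiT T A φ₀ (∑ j, αstar j • Bs j) ε) -
              C.mulVec (phiT T A φ₀ (∑ j, α j • Bs j) ε)) := by
  intro αstar α hne
  set D := ∑ j, αstar j • Bs j - ∑ j, α j • Bs j
  have hD : D ≠ 0 :=
    sub_ne_zero.2 fun h => hne (funext (Fintype.linearIndependent_iffₛ.1 hli _ _ h)).symm
  obtain ⟨v, hv⟩ : ∃ v, D *ᵥ v ≠ 0 := by
    by_contra! h
    exact hD (ext_iff_mulVec.2 fun v => by simp [h v])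
  obtain ⟨t, ht, hout⟩ := exists_mulVec_integral_exp_mulVec_ne_zero hrank hT hv
  refine ⟨{x | x ≤ t}.indicator fun _ => v, (memLp_const v).indicator measurableSet_Iic, ?_⟩
  rw [← mulVec_sub, phiT_indicator_const_sub ht]
  simpa using dotProduct_self_star_pos_iff.2 hout

/-- for a fully observable system and linearly independent `B_1,…,B_K`,
any `α ≠ α⋆` can be discriminated from `α⋆` by some `L²` control; in particular `α = α⋆`
is the unique solution of the min-max problem. -/
theorem minmax_unique_solution {N M P K : ℕ}
    (hN : 0 < N) (hM : 0 < M) (hP : 0 < P) (hK : 0 < K)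
    (T : ℝ) (hT : 0 < T)
    (A : Matrix (Fin N) (Fin N) ℝ) (C : Matrix (Fin P) (Fin N) ℝ)
    (φ₀ : Fin N → ℝ)
    (hrank : (obsMat A C).rank = N)
    (Bs : Fin K → Matrix (Fin N) (Fin M) ℝ)
    (hli : LinearIndependent ℝ Bs) :
    ∀ αstar α : Fin K → ℝ, α ≠ αstar →
      ∃ ε : ℝ → Fin M → ℝ,
        MemLp ε 2 (volume.restrict (Set.Ioc (0:ℝ) T)) ∧
        0 < (C.mulVec (phiT T A φ₀ (∑ j, αstar j • Bs j) ε) -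
              C.mulVec (phiT T A φ₀ (∑ j, α j • Bs j) ε)) ⬝ᵥ
            (C.mulVec (phiT T A φ₀ (∑ j, αstar j • Bs j) ε) -
              C.mulVec (phiT T A φ₀ (∑ j, α j • Bs j) ε)) :=
  minmax_unique_solution_general T hT A C φ₀ hrank Bs hli
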